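/- Let P be a complete updating rule on a nonempty finite set S with an Ordered Surprises representation μ_0,…,μ_K (disjoint supports covering S). Then for all nonempty events A ⊆ E with P(A|E) > 0 and all B ⊆ S, P(B|A) = P(B ∩ A|E)/P(A|E); that is, OS conditional beliefs are Bayesian updates of each other whenever possible. -/

import Mathlib

open Finset

variable {S : Type*} [Fintype S] [DecidableEq S]

def IsProb (μ : S → ℝ) : Prop := (∀ s, 0 ≤ μ s) ∧ ∑ s, μ s = 1

def mass (μ : S → ℝ) (E : Finset S) : ℝ := ∑ s ∈ E, μ s

noncomputable def BU (μ : S → ℝ) (E : Finset S) : S → ℝ :=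
  fun s => if s ∈ E then μ s / mass μ E else 0

def OSRep (P : Finset S → S → ℝ) (K : ℕ) (μ : ℕ → S → ℝ) : Prop :=
  (∀ k ≤ K, IsProb (μ k)) ∧
  (∀ s : S, ∃ k ≤ K, 0 < μ k s) ∧
  (∀ E : Finset S, E.Nonempty → ∀ k ≤ K,
    0 < mass (μ k) E → (∀ j < k, mass (μ j) E = 0) → P E = BU (μ k) E)

def DisjointSupports (K : ℕ) (μ : ℕ → S → ℝ) : Prop :=
  ∀ k ≤ K, ∀ k' ≤ K, k ≠ k' → ∀ s : S, ¬ (0 < μ k s ∧ 0 < μ k' s)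


lemma mass_nonneg {μ : S → ℝ} (h : ∀ s, 0 ≤ μ s) (E : Finset S) : 0 ≤ mass μ E :=
  Finset.sum_nonneg fun s _ => h s

lemma mass_BU (μ : S → ℝ) (E A : Finset S) :
    mass (BU μ E) A = mass μ (A ∩ E) / mass μ E := by
  unfold mass BU
  rw [Finset.sum_ite_mem, Finset.sum_div]
  rfl

lemma mass_mono {μ : S → ℝ} (h : ∀ s, 0 ≤ μ s) {A E : Finset S} (hAE : A ⊆ E) :
    mass μ A ≤ mass μ E :=
  Finset.sum_le_sum_of_subset_of_nonneg hAE fun s _ _ => h s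

theorem os_conditional_bayes [Nonempty S] (P : Finset S → S → ℝ) (K : ℕ) (μ : ℕ → S → ℝ)
    (hP : ∀ E : Finset S, E.Nonempty → IsProb (P E))
    (hOS : OSRep P K μ) (hdisj : DisjointSupports K μ)
    (A E : Finset S) (hA : A.Nonempty) (hE : E.Nonempty) (hAE : A ⊆ E)
    (hpos : 0 < mass (P E) A) (B : Finset S) :
    mass (P A) B = mass (P E) (B ∩ A) / mass (P E) A := by
  obtain ⟨hprob, hcov, hrep⟩ := hOS
  have hex : ∃ k, k ≤ K ∧ 0 < mass (μ k) E := by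
    obtain ⟨s, hs⟩ := hE
    obtain ⟨k, hk, hks⟩ := hcov s
    refine ⟨k, hk, lt_of_lt_of_le hks ?_⟩
    exact Finset.single_le_sum (fun t _ => (hprob k hk).1 t) hs
  classical
  set k0 := Nat.find hex with hk0def
  obtain ⟨hk0K, hEpos⟩ := Nat.find_spec hex
  have hEzero : ∀ j < k0, mass (μ j) E = 0 := by
    intro j hj
    have h1 := Nat.find_min hex hj
    have hjK : j ≤ K := le_trans (le_of_lt hj) hk0K
    have := mass_nonneg (hprob j hjK).1 E
    push_neg at h1
    linarith [h1 hjK]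
  have hzero : ∀ j < k0, mass (μ j) A = 0 := by
    intro j hj
    have hjK : j ≤ K := le_trans (le_of_lt hj) hk0K
    have h1 := mass_mono (hprob j hjK).1 hAE
    have h2 := mass_nonneg (hprob j hjK).1 A
    have := hEzero j hj
    linarith
  have hPE : P E = BU (μ k0) E := hrep E hE k0 hk0K hEpos hEzero
  have hAA : A ∩ E = A := Finset.inter_eq_left.mpr hAE
  have hApos : 0 < mass (μ k0) A := by
    rw [hPE, mass_BU, hAA] at hpos
    by_contra h
    push_neg at h
    have h2 := mass_nonneg (hprob k0 hk0K).1 A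
    have : mass (μ k0) A = 0 := le_antisymm h h2
    rw [this, zero_div] at hpos
    exact lt_irrefl 0 hpos
  have hPA : P A = BU (μ k0) A := hrep A hA k0 hk0K hApos hzero
  have hBA : B ∩ A ∩ E = B ∩ A := by
    apply Finset.inter_eq_left.mpr
    exact (Finset.inter_subset_right).trans hAE
  rw [hPE, hPA, mass_BU, mass_BU, mass_BU, hBA, hAA]
  field_simp
  exact (mul_div_cancel_right₀ _ (ne_of_gt hEpos)).symm
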